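/- arXiv:2411.13822 — 3 statements merged into one kernel-verified Lean document; each statement's English description precedes it below -/
import Mathlib

section
/- Let J ≥ 2 be an integer, s ∈ (0,1), l_j = s^{j−1} for j = 1,…,J, and let φ_1,…,φ_J > 0. Let γ ∈ ℝ, c > 0, and ε ∈ [0, 1/2], and let Q_1,…,Q_J > 0 satisfy |Q_j/(c · l_j^{−γ}) − 1| ≤ ε for every j. Then the refined Hill functional γ̂ = (Σ_{j=1}^J φ_j log(1/l_j))^{−1} Σ_{j=1}^J φ_j log(Q_j/Q_1) satisfies |γ̂ − γ| ≤ 4ε · (Σ_{j=1}^J φ_j)/(Σ_{j=1}^J φ_j log(1/l_j)). In particular, if all intermediate quantile values are estimated with relative error at most ε ≤ 1/2, the refined Hill estimate of the extreme value index has error O(ε). -/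
/-!
Write `Q_j = c l_j^{-γ} e^{δ_j}`. Since `l_1 = 1`, `log (Q_j / Q_1) = γ log (1/l_j) + (δ_j - δ_1)`,
so the weighted average defining `γ̂` reproduces `γ` exactly up to the weighted average of the
errors `δ_j - δ_1`. A relative error `ε ≤ 1/2` gives `|δ_j| ≤ 2ε`, since `log` is 2-Lipschitz
on `[1/2, ∞)`.
-/

open Real Finset

lemma Real.abs_log_le_two_mul_abs_sub_one {u : ℝ} (hu : 1 / 2 ≤ u) :
    |log u| ≤ 2 * |u - 1| := by
  have hu0 : 0 < u := by linarith
  have hlower : (u - 1) / u ≤ log u := by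
    simpa [sub_div, hu0.ne'] using one_sub_inv_le_log_of_pos hu0
  have hratio : |(u - 1) / u| ≤ 2 * |u - 1| := by
    rw [abs_div, abs_of_pos hu0, div_le_iff₀ hu0]
    nlinarith [abs_nonneg (u - 1)]
  rw [abs_le]
  constructor <;>
    linarith [log_le_sub_one_of_pos hu0, neg_abs_le ((u - 1) / u), le_abs_self (u - 1)]

lemma Real.abs_log_div_le_two_mul {q a ε : ℝ} (hε : ε ≤ 1 / 2) (h : |q / a - 1| ≤ ε) :
    |log (q / a)| ≤ 2 * ε := by
  have hhalf : 1 / 2 ≤ q / a := by linarith [neg_abs_le (q / a - 1)]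
  linarith [abs_log_le_two_mul_abs_sub_one hhalf]

lemma Real.log_div_eq_of_pareto {c γ l q q₀ : ℝ} (hc : 0 < c) (hl : 0 < l) (hq : 0 < q)
    (hq₀ : 0 < q₀) :
    log (q / q₀) = γ * log (1 / l) + (log (q / (c * l ^ (-γ))) - log (q₀ / c)) := by
  have hpow : 0 < l ^ (-γ) := rpow_pos_of_pos hl _
  rw [log_div hq.ne' hq₀.ne', log_div hq.ne' (by positivity), log_div hq₀.ne' hc.ne',
    log_mul hc.ne' hpow.ne', log_rpow hl, one_div, log_inv]
  ring

lemma abs_inv_sum_mul_sum_mul_add_sub_le {ι : Type*} [Fintype ι] {φ x δ : ι → ℝ} {γ η : ℝ}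
    (hφ : ∀ i, 0 ≤ φ i) (hD : 0 < ∑ i, φ i * x i) (hδ : ∀ i, |δ i| ≤ η) :
    |(∑ i, φ i * x i)⁻¹ * ∑ i, φ i * (γ * x i + δ i) - γ| ≤
      η * (∑ i, φ i) / ∑ i, φ i * x i := by
  have hsplit : (∑ i, φ i * x i)⁻¹ * ∑ i, φ i * (γ * x i + δ i) - γ =
      (∑ i, φ i * δ i) / ∑ i, φ i * x i := by
    simp only [mul_add, sum_add_distrib, mul_left_comm _ γ, ← mul_sum]
    field_simp
    ring
  have herr : |∑ i, φ i * δ i| ≤ η * ∑ i, φ i := by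
    calc |∑ i, φ i * δ i| ≤ ∑ i, φ i * |δ i| := by
          refine (abs_sum_le_sum_abs _ _).trans_eq (sum_congr rfl fun i _ => ?_)
          rw [abs_mul, abs_of_nonneg (hφ i)]
      _ ≤ ∑ i, φ i * η := sum_le_sum fun i _ => mul_le_mul_of_nonneg_left (hδ i) (hφ i)
      _ = η * ∑ i, φ i := by rw [← sum_mul, mul_comm]
  rw [hsplit, abs_div, abs_of_pos hD]
  exact div_le_div_of_nonneg_right herr hD.le

lemma sum_mul_log_inv_pow_pos {J : ℕ} (hJ : 2 ≤ J) {s : ℝ} (hs : s ∈ Set.Ioo (0 : ℝ) 1)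
    {φ : Fin J → ℝ} (hφ : ∀ j, 0 < φ j) :
    0 < ∑ j : Fin J, φ j * log (1 / s ^ (j : ℕ)) := by
  have hlog : ∀ j : Fin J, log (1 / s ^ (j : ℕ)) = (j : ℕ) * log (1 / s) := fun j => by
    rw [← one_div_pow, log_pow]
  have hlog_s : 0 < log (1 / s) := log_pos (one_lt_one_div hs.1 hs.2)
  refine sum_pos' (fun j _ => ?_) ⟨⟨1, by omega⟩, mem_univ _, ?_⟩
  · rw [hlog]; have := hφ j; positivity
  · rw [hlog]; simpa using mul_pos (hφ _) hlog_s

/-- Deterministic perturbation bound for the refined Hill functional: if each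
intermediate quantile value `Q_j` has relative error at most `ε ≤ 1/2` with
respect to the exact Pareto values `c · l_j^{-γ}`, then the refined Hill
estimate of the extreme value index has error at most
`4ε (Σ φ_j)/(Σ φ_j log(1/l_j))`. -/
theorem stmt2 (J : ℕ) (hJ : 2 ≤ J) (s : ℝ) (hs : s ∈ Set.Ioo (0:ℝ) 1)
    (l : Fin J → ℝ) (hl : ∀ j : Fin J, l j = s ^ (j : ℕ))
    (φ : Fin J → ℝ) (hφ : ∀ j, 0 < φ j)
    (γ c ε : ℝ) (hc : 0 < c) (hε : ε ∈ Set.Icc (0:ℝ) (1/2))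
    (Q : Fin J → ℝ) (hQpos : ∀ j, 0 < Q j)
    (hQ : ∀ j, |Q j / (c * (l j) ^ (-γ)) - 1| ≤ ε) :
    |(∑ j, φ j * Real.log (1 / l j))⁻¹ *
        (∑ j, φ j * Real.log (Q j / Q ⟨0, by omega⟩)) - γ| ≤
      4 * ε * (∑ j, φ j) / (∑ j, φ j * Real.log (1 / l j)) := by
  set j₀ : Fin J := ⟨0, by omega⟩
  set δ : Fin J → ℝ := fun j => log (Q j / (c * l j ^ (-γ)))
  have hl₀ : l j₀ = 1 := by simp [hl, j₀]
  have hδ₀ : δ j₀ = log (Q j₀ / c) := by simp [δ, hl₀]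
  have hδ : ∀ j, |δ j| ≤ 2 * ε := fun j => abs_log_div_le_two_mul hε.2 (hQ j)
  have hD : 0 < ∑ j, φ j * log (1 / l j) := by
    simpa only [hl] using sum_mul_log_inv_pow_pos hJ hs hφ
  have hlog : ∀ j, log (Q j / Q j₀) = γ * log (1 / l j) + (δ j - δ j₀) := fun j => by
    rw [hδ₀]
    exact log_div_eq_of_pareto hc (by rw [hl]; exact pow_pos hs.1 _) (hQpos j) (hQpos j₀)
  simp only [hlog]
  convert abs_inv_sum_mul_sum_mul_add_sub_le (fun j => (hφ j).le) hD
    (fun j => (abs_sub _ _).trans (add_le_add (hδ j) (hδ j₀))) using 2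
  ring
end

section
/- Let γ > 0 and let F : ℝ → ℝ be a continuous cumulative distribution function, differentiable with derivative f, such that F(t) < 1 for all t ∈ ℝ. For τ ∈ (0,1) let Q(τ) = inf{y ∈ ℝ : F(y) ≥ τ}. Assume the von Mises condition lim_{t→∞} t·f(t)/(1 − F(t)) = 1/γ, and assume lim_{τ→1⁻} (1 − τ)^{γ}·Q(τ) = c for some c > 0. Then lim_{τ→1⁻} f(Q(τ))/(1 − τ)^{γ+1} = 1/(γ·c); in particular the density evaluated at the τth quantile decays at rate (1 − τ)^{γ+1} as τ → 1. -/
/-!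
Since `F` is continuous, the quantile function inverts it: `F (Q τ) = τ`. The rate assumption
forces `Q τ → ∞` as `τ → 1⁻`, so the von Mises condition may be evaluated at `t = Q τ`, and then
`f (Q τ) / (1 - τ) ^ (γ + 1) = (Q τ * f (Q τ) / (1 - F (Q τ))) * ((1 - τ) ^ γ * Q τ)⁻¹`
tends to `(1 / γ) * c⁻¹`.
-/

open Filter Topology Set

theorem Continuous.apply_sInf_setOf_le_eq {F : ℝ → ℝ} (hcont : Continuous F)
    (hbot : Tendsto F atBot (𝓝 0)) (htop : Tendsto F atTop (𝓝 1)) {τ : ℝ} (hτ : τ ∈ Ioo 0 1) :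
    F (sInf {y | τ ≤ F y}) = τ := by
  set S := {y | τ ≤ F y}
  have hne : S.Nonempty := (htop.eventually (eventually_gt_nhds hτ.2)).exists.imp fun _ => le_of_lt
  obtain ⟨x, hx⟩ := eventually_atBot.mp (hbot.eventually (eventually_lt_nhds hτ.1))
  have hbdd : BddBelow S := ⟨x, fun y hy => le_of_not_gt fun hyx => (hx y hyx.le).not_ge hy⟩
  refine le_antisymm ?_ ((isClosed_le continuous_const hcont).csInf_mem hne hbdd)
  -- Points left of the infimum lie outside `S`, so `F < τ` there; pass to the limit from the left.
  have hleft : ∀ᶠ y in 𝓝[<] sInf S, F y ≤ τ :=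
    eventually_nhdsWithin_of_forall fun y hy => (not_le.mp (notMem_of_lt_csInf hy hbdd : y ∉ S)).le
  exact le_of_tendsto (hcont.continuousAt.tendsto.mono_left nhdsWithin_le_nhds) hleft

theorem tendsto_one_sub_rpow_nhdsLT_one {γ : ℝ} (hγ : 0 < γ) :
    Tendsto (fun τ : ℝ => (1 - τ) ^ γ) (𝓝[<] 1) (𝓝[>] 0) := by
  refine tendsto_nhdsWithin_iff.mpr ⟨?_, ?_⟩
  · have hsub : Tendsto (fun τ : ℝ => 1 - τ) (𝓝[<] 1) (𝓝 0) := by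
      simpa using (tendsto_const_nhds (x := (1 : ℝ))).sub
        (tendsto_id.mono_left (nhdsWithin_le_nhds (a := (1 : ℝ)) (s := Iio 1)))
    simpa [Function.comp_def, Real.zero_rpow hγ.ne'] using
      (Real.continuousAt_rpow_const 0 γ (Or.inr hγ.le)).tendsto.comp hsub
  · filter_upwards [self_mem_nhdsWithin] with τ hτ
    exact Real.rpow_pos_of_pos (sub_pos.mpr hτ) γ

theorem tendsto_atTop_of_tendsto_mul_of_tendsto_nhdsGT_zero {α : Type*} {l : Filter α}
    {g Q : α → ℝ} {c : ℝ} (hc : 0 < c) (hg : Tendsto g l (𝓝[>] 0))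
    (hgQ : Tendsto (fun x => g x * Q x) l (𝓝 c)) : Tendsto Q l atTop := by
  refine (hgQ.pos_mul_atTop hc (tendsto_inv_nhdsGT_zero.comp hg)).congr' ?_
  filter_upwards [hg self_mem_nhdsWithin] with x (hx : 0 < g x)
  simp only [Function.comp_apply]
  field_simp

theorem stmt9_general (γ : ℝ) (hγ : 0 < γ) (F f : ℝ → ℝ)
    (hcont : Continuous F)
    (hbot : Tendsto F atBot (nhds 0)) (htop : Tendsto F atTop (nhds 1))
    (Q : ℝ → ℝ) (hQ : ∀ τ ∈ Set.Ioo (0:ℝ) 1, Q τ = sInf {y : ℝ | τ ≤ F y})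
    (hvonMises : Tendsto (fun t : ℝ => t * f t / (1 - F t)) atTop (nhds (1 / γ)))
    (c : ℝ) (hc : 0 < c)
    (hQrate : Tendsto (fun τ : ℝ => (1 - τ) ^ γ * Q τ)
      (nhdsWithin 1 (Set.Iio 1)) (nhds c)) :
    Tendsto (fun τ : ℝ => f (Q τ) / (1 - τ) ^ (γ + 1))
      (nhdsWithin 1 (Set.Iio 1)) (nhds (1 / (γ * c))) := by
  have hQtop : Tendsto Q (𝓝[<] 1) atTop :=
    tendsto_atTop_of_tendsto_mul_of_tendsto_nhdsGT_zero hc (tendsto_one_sub_rpow_nhdsLT_one hγ)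
      hQrate
  have hlim := (hvonMises.comp hQtop).mul (hQrate.inv₀ hc.ne')
  rw [show 1 / γ * c⁻¹ = 1 / (γ * c) by field_simp] at hlim
  refine hlim.congr' ?_
  filter_upwards [self_mem_nhdsWithin, Ioo_mem_nhdsLT (show (0 : ℝ) < 1 by norm_num),
    hQtop.eventually (eventually_gt_atTop 0)] with τ hτ1 hτ hQpos
  have hFQ : F (Q τ) = τ := hQ τ hτ ▸ hcont.apply_sInf_setOf_le_eq hbot htop hτ
  have h1τ : (0 : ℝ) < 1 - τ := sub_pos.mpr hτ1
  have hpow : (0 : ℝ) < (1 - τ) ^ γ := Real.rpow_pos_of_pos h1τ γ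
  simp only [Function.comp_apply, hFQ, Real.rpow_add h1τ, Real.rpow_one]
  field_simp

/-- Rate of decay of the density at the `τ`-th quantile for a heavy-tailed
distribution: under the von Mises condition `t f(t)/(1 - F(t)) → 1/γ` and
`(1-τ)^γ Q(τ) → c > 0`, one has `f(Q(τ))/(1-τ)^{γ+1} → 1/(γ c)` as `τ → 1⁻`. -/
theorem stmt9 (γ : ℝ) (hγ : 0 < γ) (F f : ℝ → ℝ)
    (hmono : Monotone F) (hcont : Continuous F)
    (hbot : Tendsto F atBot (nhds 0)) (htop : Tendsto F atTop (nhds 1))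
    (hderiv : ∀ t : ℝ, HasDerivAt F (f t) t)
    (hlt : ∀ t : ℝ, F t < 1)
    (Q : ℝ → ℝ) (hQ : ∀ τ ∈ Set.Ioo (0:ℝ) 1, Q τ = sInf {y : ℝ | τ ≤ F y})
    (hvonMises : Tendsto (fun t : ℝ => t * f t / (1 - F t)) atTop (nhds (1 / γ)))
    (c : ℝ) (hc : 0 < c)
    (hQrate : Tendsto (fun τ : ℝ => (1 - τ) ^ γ * Q τ)
      (nhdsWithin 1 (Set.Iio 1)) (nhds c)) :
    Tendsto (fun τ : ℝ => f (Q τ) / (1 - τ) ^ (γ + 1))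
      (nhdsWithin 1 (Set.Iio 1)) (nhds (1 / (γ * c))) :=
  stmt9_general γ hγ F f hcont hbot htop Q hQ hvonMises c hc hQrate
end

section
/- Let τ ∈ (0,1), let Y be a real random variable with cumulative distribution function F, and let q ∈ ℝ with F(q) = τ and P(Y ≤ q) = τ. Let m > 0 and δ > 0 and suppose F(q + u) − F(q) ≥ m·u for all u ∈ [0, δ] and F(q) − F(q + u) ≥ m·|u| for all u ∈ [−δ, 0]. Then for every v with |v| ≤ δ, E[ρ_τ(Y − q − v) − ρ_τ(Y − q)] ≥ (m/2)·v², where ρ_τ(u) = u(τ − 1{u < 0}) is the quantile check loss. (The difference ρ_τ(Y − q − v) − ρ_τ(Y − q) is bounded by |v|, hence integrable.) -/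
/-!
Since `ρ_τ(u) = τ u + (-u)⁺`, the excess loss `ρ_τ(Y - q - v) - ρ_τ(Y - q)` equals
`-τ v + (q + v - Y)⁺ - (q - Y)⁺`, and since `(b - y)⁺ - (a - y)⁺ = ∫_a^b 1{y ≤ s} ds`,
Fubini turns its expectation into `∫_q^{q+v} (F s - τ) ds`. As `F q = τ`, the linear growth
of `F` around `q` bounds this integrand below by `m |s - q|`, whose integral is `m v² / 2`.
-/

open MeasureTheory Set

noncomputable def checkLoss (τ u : ℝ) : ℝ := u * (τ - if u < 0 then 1 else 0)

theorem checkLoss_eq_mul_add_max (τ u : ℝ) : checkLoss τ u = τ * u + max (-u) 0 := by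
  rw [checkLoss]
  split_ifs with hu
  · rw [max_eq_left (by linarith)]; ring
  · rw [max_eq_right (by linarith)]; ring

theorem hasDerivWithinAt_max_sub_zero_Ioi (y x : ℝ) :
    HasDerivWithinAt (fun s : ℝ => max (s - y) 0) (if y ≤ x then 1 else 0) (Ioi x) x := by
  split_ifs with h
  · refine ((hasDerivAt_id x).sub_const y).hasDerivWithinAt.congr (fun s hs => ?_) ?_
    · exact max_eq_left (by linarith [mem_Ioi.mp hs])
    · exact max_eq_left (by simpa using h)
  · refine (hasDerivWithinAt_const x _ 0).congr_of_eventuallyEq ?_ (max_eq_right (by linarith))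
    filter_upwards [nhdsWithin_le_nhds (gt_mem_nhds (not_le.mp h))] with s hs
    exact max_eq_right (by linarith)

theorem integral_ite_le_one_zero (y a b : ℝ) :
    ∫ s in a..b, (if y ≤ s then (1 : ℝ) else 0) = max (b - y) 0 - max (a - y) 0 := by
  have hmono : Monotone fun s : ℝ => if y ≤ s then (1 : ℝ) else 0 := fun s t hst => by
    by_cases hs : y ≤ s
    · simp [hs, hs.trans hst]
    · dsimp only; split_ifs <;> norm_num
  exact intervalIntegral.integral_eq_sub_of_hasDeriv_right
    ((continuous_sub_right y).max continuous_const).continuousOn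
    (fun x _ => hasDerivWithinAt_max_sub_zero_Ioi y x) hmono.intervalIntegrable

section
variable {Ω : Type*} [MeasurableSpace Ω] {μ : Measure Ω} [IsFiniteMeasure μ] {Y : Ω → ℝ}

theorem monotone_measureReal_setOf_le :
    Monotone fun s => μ.real {ω | Y ω ≤ s} :=
  fun _ _ hst => measureReal_mono fun _ h => le_trans h hst

theorem integrable_max_sub_max (hY : Measurable Y) (a b : ℝ) :
    Integrable (fun ω => max (b - Y ω) 0 - max (a - Y ω) 0) μ := by
  refine Integrable.of_bound (by fun_prop) |b - a| (ae_of_all _ fun ω => ?_)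
  calc |max (b - Y ω) 0 - max (a - Y ω) 0| ≤ |(b - Y ω) - (a - Y ω)| :=
        abs_max_sub_max_le_abs _ _ _
    _ = |b - a| := by rw [sub_sub_sub_cancel_right]

theorem integral_max_sub_max_eq_setIntegral (hY : Measurable Y) {a b : ℝ} (hab : a ≤ b) :
    ∫ ω, (max (b - Y ω) 0 - max (a - Y ω) 0) ∂μ
      = ∫ s in Ioc a b, μ.real {ω | Y ω ≤ s} := by
  have hstep : ∀ ω, max (b - Y ω) 0 - max (a - Y ω) 0
      = ∫ s in Ioc a b, (if Y ω ≤ s then (1 : ℝ) else 0) := fun ω => by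
    rw [← intervalIntegral.integral_of_le hab, integral_ite_le_one_zero]
  have hint : Integrable (Function.uncurry fun ω s => if Y ω ≤ s then (1 : ℝ) else 0)
      (μ.prod (volume.restrict (Ioc a b))) := by
    have : IsFiniteMeasure (volume.restrict (Ioc a b)) :=
      isFiniteMeasure_restrict.mpr measure_Ioc_lt_top.ne
    refine Integrable.of_bound ?_ 1 (ae_of_all _ fun p => ?_)
    · exact (Measurable.ite (measurableSet_le (hY.comp measurable_fst) measurable_snd)
        measurable_const measurable_const).aestronglyMeasurable
    · dsimp only [Function.uncurry]; split_ifs <;> norm_num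
  simp_rw [hstep]
  rw [integral_integral_swap hint]
  refine setIntegral_congr_fun measurableSet_Ioc fun s _ => ?_
  exact integral_indicator_one (hY measurableSet_Iic)

theorem integral_max_sub_max_eq_intervalIntegral (hY : Measurable Y) (a b : ℝ) :
    ∫ ω, (max (b - Y ω) 0 - max (a - Y ω) 0) ∂μ
      = ∫ s in a..b, μ.real {ω | Y ω ≤ s} := by
  rcases le_total a b with hab | hba
  · rw [intervalIntegral.integral_of_le hab, integral_max_sub_max_eq_setIntegral hY hab]
  · rw [intervalIntegral.integral_symm, intervalIntegral.integral_of_le hba,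
      ← integral_max_sub_max_eq_setIntegral hY hba, ← integral_neg]
    simp only [neg_sub]

theorem integral_checkLoss_sub_checkLoss [IsProbabilityMeasure μ] (hY : Measurable Y)
    (τ q v : ℝ) :
    ∫ ω, (checkLoss τ (Y ω - q - v) - checkLoss τ (Y ω - q)) ∂μ
      = ∫ s in q..q + v, (μ.real {ω | Y ω ≤ s} - τ) := by
  have hpt : ∀ ω, checkLoss τ (Y ω - q - v) - checkLoss τ (Y ω - q)
      = -(τ * v) + (max (q + v - Y ω) 0 - max (q - Y ω) 0) := fun ω => by
    rw [checkLoss_eq_mul_add_max, checkLoss_eq_mul_add_max,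
      show -(Y ω - q - v) = q + v - Y ω by ring, neg_sub]
    ring
  simp_rw [hpt]
  rw [integral_add (integrable_const _) (integrable_max_sub_max hY q (q + v)),
    integral_max_sub_max_eq_intervalIntegral hY, intervalIntegral.integral_sub
      monotone_measureReal_setOf_le.intervalIntegrable intervalIntegrable_const,
    integral_const, intervalIntegral.integral_const]
  simp only [probReal_univ, smul_eq_mul, add_sub_cancel_left]
  ring

end

section
variable {f : ℝ → ℝ} {a b m : ℝ}

theorem mul_sq_le_integral_sub_left (hab : a ≤ b) (hf : IntervalIntegrable f volume a b)
    (h : ∀ s ∈ Icc a b, m * (s - a) ≤ f s - f a) :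
    m / 2 * (b - a) ^ 2 ≤ ∫ s in a..b, (f s - f a) := by
  calc m / 2 * (b - a) ^ 2 = ∫ s in a..b, m * (s - a) := by
        rw [intervalIntegral.integral_const_mul,
          intervalIntegral.integral_comp_sub_right (fun x => x), integral_id]
        ring
    _ ≤ ∫ s in a..b, (f s - f a) := intervalIntegral.integral_mono_on hab
        (Continuous.intervalIntegrable (by fun_prop) a b) (hf.sub intervalIntegrable_const) h

theorem mul_sq_le_integral_sub_right (hab : a ≤ b) (hf : IntervalIntegrable f volume a b)
    (h : ∀ s ∈ Icc a b, m * (b - s) ≤ f b - f s) :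
    m / 2 * (b - a) ^ 2 ≤ ∫ s in a..b, (f b - f s) := by
  calc m / 2 * (b - a) ^ 2 = ∫ s in a..b, m * (b - s) := by
        rw [intervalIntegral.integral_const_mul,
          intervalIntegral.integral_comp_sub_left (fun x => x), integral_id]
        ring
    _ ≤ ∫ s in a..b, (f b - f s) := intervalIntegral.integral_mono_on hab
        (Continuous.intervalIntegrable (by fun_prop) a b) (intervalIntegrable_const.sub hf) h

theorem mul_sq_le_integral_sub_of_linear_growth (hf : Monotone f) {q δ v : ℝ}
    (hlow : ∀ u ∈ Icc 0 δ, m * u ≤ f (q + u) - f q)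
    (hup : ∀ u ∈ Icc (-δ) 0, m * |u| ≤ f q - f (q + u)) (hv : |v| ≤ δ) :
    m / 2 * v ^ 2 ≤ ∫ s in q..q + v, (f s - f q) := by
  obtain ⟨hv₁, hv₂⟩ := abs_le.mp hv
  rcases le_or_gt 0 v with hv0 | hv0
  · have h := mul_sq_le_integral_sub_left (a := q) (b := q + v) (m := m) (by linarith)
      hf.intervalIntegrable fun s hs => by
        simpa using hlow (s - q) ⟨by linarith [hs.1], by linarith [hs.2]⟩
    simpa using h
  · have h := mul_sq_le_integral_sub_right (a := q + v) (b := q) (m := m) (by linarith)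
      hf.intervalIntegrable fun s hs => by
        have := hup (s - q) ⟨by linarith [hs.1], by linarith [hs.2]⟩
        rwa [abs_sub_comm, abs_of_nonneg (by linarith [hs.2]), add_sub_cancel] at this
    rw [intervalIntegral.integral_symm, ← intervalIntegral.integral_neg]
    simpa using h

end

theorem stmt10_general {Ω : Type*} [MeasureSpace Ω]
    [IsProbabilityMeasure (volume : Measure Ω)]
    (τ : ℝ)
    (Y : Ω → ℝ) (hYm : Measurable Y)
    (F : ℝ → ℝ) (hF : ∀ y, F y = (volume {ω | Y ω ≤ y}).toReal)
    (q : ℝ) (hq : F q = τ)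
    (m δ : ℝ)
    (hlow : ∀ u ∈ Set.Icc (0:ℝ) δ, m * u ≤ F (q + u) - F q)
    (hup : ∀ u ∈ Set.Icc (-δ) (0:ℝ), m * |u| ≤ F q - F (q + u))
    (ρ : ℝ → ℝ) (hρ : ∀ u : ℝ, ρ u = u * (τ - if u < 0 then 1 else 0)) :
    ∀ v : ℝ, |v| ≤ δ →
      m / 2 * v ^ 2 ≤ ∫ ω, (ρ (Y ω - q - v) - ρ (Y ω - q)) := by
  intro v hv
  have hcdf : F = fun s => volume.real {ω | Y ω ≤ s} := funext hF
  rw [show ρ = checkLoss τ from funext hρ, integral_checkLoss_sub_checkLoss hYm, ← hq]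
  rw [hcdf] at hlow hup ⊢
  exact mul_sq_le_integral_sub_of_linear_growth monotone_measureReal_setOf_le hlow hup hv

/-- Quadratic lower bound on the excess expected quantile check loss around the
true quantile: if the distribution function of `Y` grows at least linearly with
slope `m` in a `δ`-neighborhood of the `τ`-quantile `q`, then for `|v| ≤ δ`,
`E[ρ_τ(Y - q - v) - ρ_τ(Y - q)] ≥ (m/2) v²`. -/
theorem stmt10 {Ω : Type*} [MeasureSpace Ω]
    [IsProbabilityMeasure (volume : Measure Ω)]
    (τ : ℝ) (hτ : τ ∈ Set.Ioo (0:ℝ) 1)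
    (Y : Ω → ℝ) (hYm : Measurable Y)
    (F : ℝ → ℝ) (hF : ∀ y, F y = (volume {ω | Y ω ≤ y}).toReal)
    (q : ℝ) (hq : F q = τ)
    (m δ : ℝ) (hm : 0 < m) (hδ : 0 < δ)
    (hlow : ∀ u ∈ Set.Icc (0:ℝ) δ, m * u ≤ F (q + u) - F q)
    (hup : ∀ u ∈ Set.Icc (-δ) (0:ℝ), m * |u| ≤ F q - F (q + u))
    (ρ : ℝ → ℝ) (hρ : ∀ u : ℝ, ρ u = u * (τ - if u < 0 then 1 else 0)) :
    ∀ v : ℝ, |v| ≤ δ →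
      m / 2 * v ^ 2 ≤ ∫ ω, (ρ (Y ω - q - v) - ρ (Y ω - q)) :=
  stmt10_general τ Y hYm F hF q hq m δ hlow hup ρ hρ
end
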